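/- arXiv:2409.12897 — 5 statements merged into one kernel-verified Lean document; each statement's English description precedes it below -/
import Mathlib

section
/- For each n ≥ 1 let (d^n_{i,j})_{i≥0, j≥1} be nonnegative integers, non-increasing in j for each fixed i, with finite row sums D^n_i := Σ_{j≥1} d^n_{i,j}, satisfying the coherence condition #{j ≥ 1 : d^n_{i+1,j} > 0} ≤ D^n_i for all i ≥ 0, and set h^n := inf{i ≥ 0 : d^n_{i,1} = 0}. Assume: (i) liminf_{n→∞} h^n/n ≥ 1; (ii) for every ε > 0 there exists δ(ε) > 0 such that for every n and all integers i, i' with εn < i, i' < (1−ε)n, d^n_{i,1} > ε D^n_i and d^n_{i',1} > ε D^n_{i'}, one has either i = i' or |i − i'| > δ(ε) n. Then for every ε ∈ (0,1), min_{εn ≤ i ≤ (1−ε)n} D^n_i → ∞ as n → ∞. -/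
open Filter

set_option maxHeartbeats 1000000 in
/-- For trees with fixed degrees and heights: under the liminf-height condition and the
separation condition `(Lim_≠)` on heights carrying macroscopically large degrees, the
profile `D^n_i` tends to infinity uniformly on `[εn, (1-ε)n]`. -/
theorem stmt0 (d : ℕ → ℕ → ℕ → ℕ) (D : ℕ → ℕ → ℕ) (h : ℕ → ℕ)
    (hsupp : ∀ n i, (Function.support (d n i)).Finite)
    (hmono : ∀ n i, Antitone (d n i))
    (hD : ∀ n i, D n i = ∑ᶠ j, d n i j)
    (hcoh : ∀ n i, {j | 0 < d n (i + 1) j}.ncard ≤ D n i)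
    (hh : ∀ n, h n = sInf {i | d n i 0 = 0})
    (hliminf : 1 ≤ Filter.liminf (fun n => (h n : ℝ) / n) Filter.atTop)
    (hsep : ∀ ε : ℝ, 0 < ε → ∃ δ : ℝ, 0 < δ ∧ ∀ n i i' : ℕ,
      ε * n < i → (i : ℝ) < (1 - ε) * n →
      ε * n < i' → (i' : ℝ) < (1 - ε) * n →
      ε * (D n i) < d n i 0 → ε * (D n i') < d n i' 0 →
      i = i' ∨ δ * n < |(i : ℝ) - (i' : ℝ)|) :
    ∀ ε : ℝ, 0 < ε → ε < 1 → ∀ M : ℕ, ∀ᶠ n : ℕ in atTop,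
      ∀ i : ℕ, ε * n ≤ i → (i : ℝ) ≤ (1 - ε) * n → M ≤ D n i := by
  intro ε hε hε1 M
  set ε' : ℝ := min (ε / 2) (1 / (M + 1)) with hε'def
  have hMpos : (0 : ℝ) < (M : ℝ) + 1 := by positivity
  have hε'pos : 0 < ε' := lt_min (by linarith) (by positivity)
  have hε'ε : ε' < ε := lt_of_le_of_lt (min_le_left _ _) (by linarith)
  have hε'2 : ε' ≤ ε / 2 := min_le_left _ _
  have hε'M : ε' ≤ 1 / ((M : ℝ) + 1) := min_le_right _ _
  obtain ⟨δ, hδpos, hδ⟩ := hsep ε' hε'pos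
  -- eventually the height is large
  have hbdd : Filter.IsBoundedUnder (· ≥ ·) atTop (fun n : ℕ => (h n : ℝ) / n) :=
    Filter.isBoundedUnder_of ⟨0, fun n => div_nonneg (Nat.cast_nonneg _) (Nat.cast_nonneg _)⟩
  have hev : ∀ᶠ n : ℕ in atTop, 1 - ε / 2 < (h n : ℝ) / n :=
    eventually_lt_of_lt_liminf (lt_of_lt_of_le (by linarith) hliminf) hbdd
  have hev2 : ∀ᶠ n : ℕ in atTop, max (2 / ε) (1 / δ) < (n : ℝ) :=
    (tendsto_natCast_atTop_atTop (R := ℝ)).eventually_gt_atTop _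
  filter_upwards [hev, hev2] with n hn1 hn2
  intro i hi1 hi2
  by_contra hcon
  push_neg at hcon
  -- basic facts about n
  have hn2ε : 2 / ε < (n : ℝ) := lt_of_le_of_lt (le_max_left _ _) hn2
  have hn1δ : 1 / δ < (n : ℝ) := lt_of_le_of_lt (le_max_right _ _) hn2
  have hnpos : (0 : ℝ) < n := lt_trans (by positivity) hn2ε
  have hεn : 2 < ε * n := by
    rw [div_lt_iff₀ hε] at hn2ε
    nlinarith
  have hδn : 1 < δ * n := by
    rw [div_lt_iff₀ hδpos] at hn1δ
    nlinarith
  -- the height is large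
  have hhn : (1 - ε / 2) * n < (h n : ℝ) := by
    rw [lt_div_iff₀ hnpos] at hn1
    linarith
  -- i + 1 < h n
  have hih : ((i : ℝ) + 1) < (h n : ℝ) := by nlinarith
  have hihn : i + 1 < h n := by exact_mod_cast hih
  -- positivity of the first entries
  have hdpos : ∀ k, k < h n → 0 < d n k 0 := by
    intro k hk
    rcases Nat.eq_zero_or_pos (d n k 0) with h0 | h0
    · exfalso
      have : h n ≤ k := by
        rw [hh n]
        exact Nat.sInf_le h0
      omega
    · exact h0
  have hd1 : 0 < d n i 0 := hdpos i (by omega)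
  have hd2 : 0 < d n (i + 1) 0 := hdpos (i + 1) hihn
  -- d n i 0 ≤ D n i
  have hfin := hsupp n i
  have hdleD : d n i 0 ≤ D n i := by
    rw [hD n i, finsum_eq_sum _ hfin]
    refine Finset.single_le_sum (f := d n i) (fun j _ => Nat.zero_le _) ?_
    rw [Set.Finite.mem_toFinset, Function.mem_support]
    omega
  -- D n (i+1) ≤ D n i * d n (i+1) 0
  have hfin2 := hsupp n (i + 1)
  have hkey : D n (i + 1) ≤ D n i * d n (i + 1) 0 := by
    have hcard : hfin2.toFinset.card ≤ D n i := by
      have hset : {j | 0 < d n (i + 1) j} = Function.support (d n (i + 1)) := by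
        ext j
        simp [Function.mem_support, Nat.pos_iff_ne_zero]
      have := hcoh n i
      rwa [hset, Set.ncard_eq_toFinset_card _ hfin2] at this
    calc D n (i + 1) = ∑ j ∈ hfin2.toFinset, d n (i + 1) j := by
            rw [hD n (i + 1), finsum_eq_sum _ hfin2]
      _ ≤ ∑ _j ∈ hfin2.toFinset, d n (i + 1) 0 :=
            Finset.sum_le_sum fun j _ => hmono n (i + 1) (Nat.zero_le j)
      _ = hfin2.toFinset.card * d n (i + 1) 0 := by
            rw [Finset.sum_const, smul_eq_mul]
      _ ≤ D n i * d n (i + 1) 0 := Nat.mul_le_mul_right _ hcard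
  -- cast key facts to ℝ
  have hDiM : (D n i : ℝ) ≤ (M : ℝ) - 1 := by
    have : D n i + 1 ≤ M := hcon
    have := (Nat.cast_le (α := ℝ)).2 this
    push_cast at this
    linarith
  have hd1' : (1 : ℝ) ≤ (d n i 0 : ℝ) := by exact_mod_cast hd1
  have hd2' : (1 : ℝ) ≤ (d n (i + 1) 0 : ℝ) := by exact_mod_cast hd2
  have hkey' : (D n (i + 1) : ℝ) ≤ (D n i : ℝ) * (d n (i + 1) 0 : ℝ) := by
    exact_mod_cast hkey
  have hDi1nonneg : (0 : ℝ) ≤ (D n (i + 1) : ℝ) := Nat.cast_nonneg _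
  have hDinonneg : (0 : ℝ) ≤ (D n i : ℝ) := Nat.cast_nonneg _
  -- window conditions
  have hw1 : ε' * n < (i : ℝ) := lt_of_lt_of_le (by nlinarith) hi1
  have hw2 : (i : ℝ) < (1 - ε') * n := lt_of_le_of_lt hi2 (by nlinarith)
  have hw3 : ε' * n < ((i + 1 : ℕ) : ℝ) := by push_cast; linarith
  have hw4 : ((i + 1 : ℕ) : ℝ) < (1 - ε') * n := by push_cast; nlinarith
  -- macroscopic degree conditions
  have hM1 : ε' * (D n i : ℝ) < (d n i 0 : ℝ) := by
    have h1 : ε' * (D n i : ℝ) ≤ (1 / ((M : ℝ) + 1)) * ((M : ℝ) - 1) := by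
      apply mul_le_mul hε'M hDiM hDinonneg (by positivity)
    have h2 : (1 / ((M : ℝ) + 1)) * ((M : ℝ) - 1) < 1 := by
      rw [div_mul_eq_mul_div, one_mul, div_lt_one hMpos]
      linarith
    linarith
  have hM2 : ε' * (D n (i + 1) : ℝ) < (d n (i + 1) 0 : ℝ) := by
    have h1 : ε' * (D n (i + 1) : ℝ) ≤ (1 / ((M : ℝ) + 1)) * ((D n i : ℝ) * (d n (i + 1) 0 : ℝ)) := by
      apply mul_le_mul hε'M (le_trans hkey' (le_refl _)) hDi1nonneg (by positivity)
    have h2 : (1 / ((M : ℝ) + 1)) * ((D n i : ℝ) * (d n (i + 1) 0 : ℝ)) < (d n (i + 1) 0 : ℝ) := by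
      rw [div_mul_eq_mul_div, one_mul, div_lt_iff₀ hMpos]
      nlinarith
    linarith
  -- apply separation
  rcases hδ n i (i + 1) hw1 hw2 hw3 hw4 hM1 hM2 with heq | habs
  · omega
  · have : |((i : ℝ) - ((i + 1 : ℕ) : ℝ))| = 1 := by
      push_cast
      rw [show (i : ℝ) - ((i : ℝ) + 1) = -1 by ring, abs_neg, abs_one]
    rw [this] at habs
    linarith
end

section
/- Let D ≥ 2 and k ≥ 1 be integers and let (d_ℓ)_{ℓ∈L} be a finite family of nonnegative integers with Σ_ℓ d_ℓ = D. Define τ(k) := Σ_ℓ (d_ℓ/D)·min(k(d_ℓ−1)/(D−1), 1). Then Σ_ℓ (d_ℓ/D)·(1 − (d_ℓ−1)/(D−1))^k ≤ 1 − τ(k)/2 ≤ e^{−τ(k)/2}. -/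
lemma exp_neg_le (t : ℝ) (h0 : 0 ≤ t) (h1 : t ≤ 1) : Real.exp (-t) ≤ 1 - t / 2 := by
  have h := Real.add_one_le_exp t
  have hpos : (0:ℝ) < 1 + t := by linarith
  have hexp : (0:ℝ) < Real.exp t := Real.exp_pos t
  rw [Real.exp_neg]
  have h2 : (Real.exp t)⁻¹ ≤ (1 + t)⁻¹ := by
    apply inv_anti₀ hpos; linarith
  have h3 : (1 + t)⁻¹ ≤ 1 - t / 2 := by
    rw [inv_le_iff_one_le_mul₀ hpos] <;> nlinarith
  linarith

lemma pointwise (x : ℝ) (hx0 : 0 ≤ x) (hx1 : x ≤ 1) (k : ℕ) (hk : 1 ≤ k) :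
    (1 - x) ^ k ≤ 1 - min ((k : ℝ) * x) 1 / 2 := by
  have hkx : (0:ℝ) ≤ (k : ℝ) * x := by positivity
  set t := min ((k : ℝ) * x) 1 with ht
  have ht0 : 0 ≤ t := le_min hkx zero_le_one
  have ht1 : t ≤ 1 := min_le_right _ _
  have htkx : t ≤ (k : ℝ) * x := min_le_left _ _
  have h1 : (1 - x) ^ k ≤ Real.exp (-((k : ℝ) * x)) := by
    have hb : 1 - x ≤ Real.exp (-x) := by
      have := Real.add_one_le_exp (-x); linarith
    calc (1 - x) ^ k ≤ (Real.exp (-x)) ^ k := pow_le_pow_left₀ (by linarith) hb k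
      _ = Real.exp (-((k : ℝ) * x)) := by
          rw [← Real.exp_nat_mul]; ring_nf
  have h2 : Real.exp (-((k : ℝ) * x)) ≤ Real.exp (-t) :=
    Real.exp_le_exp.mpr (by linarith)
  have h3 := exp_neg_le t ht0 ht1
  linarith

/-- For a finite degree family `(d ℓ)` with sum `D ≥ 2` and `k ≥ 1`, setting
`τ(k) := Σ_ℓ (d_ℓ/D)·min(k(d_ℓ−1)/(D−1), 1)`, we have
`Σ_ℓ (d_ℓ/D)·(1 − (d_ℓ−1)/(D−1))^k ≤ 1 − τ(k)/2 ≤ e^{−τ(k)/2}`. -/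
theorem stmt1 {ι : Type*} (L : Finset ι) (d : ι → ℕ) (D k : ℕ)
    (hD : 2 ≤ D) (hk : 1 ≤ k) (hsum : ∑ ℓ ∈ L, d ℓ = D) :
    (∑ ℓ ∈ L, ((d ℓ : ℝ) / D) * (1 - ((d ℓ : ℝ) - 1) / ((D : ℝ) - 1)) ^ k
      ≤ 1 - (∑ ℓ ∈ L, ((d ℓ : ℝ) / D) *
          min ((k : ℝ) * ((d ℓ : ℝ) - 1) / ((D : ℝ) - 1)) 1) / 2) ∧
    1 - (∑ ℓ ∈ L, ((d ℓ : ℝ) / D) *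
          min ((k : ℝ) * ((d ℓ : ℝ) - 1) / ((D : ℝ) - 1)) 1) / 2
      ≤ Real.exp (-(∑ ℓ ∈ L, ((d ℓ : ℝ) / D) *
          min ((k : ℝ) * ((d ℓ : ℝ) - 1) / ((D : ℝ) - 1)) 1) / 2) := by
  have hD1 : (1:ℝ) < (D:ℝ) := by exact_mod_cast Nat.lt_of_lt_of_le one_lt_two hD
  have hDpos : (0:ℝ) < (D:ℝ) := by linarith
  have hDm1 : (0:ℝ) < (D:ℝ) - 1 := by linarith
  set τ := ∑ ℓ ∈ L, ((d ℓ : ℝ) / D) *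
          min ((k : ℝ) * ((d ℓ : ℝ) - 1) / ((D : ℝ) - 1)) 1 with hτ
  constructor
  · have hsum1 : ∑ ℓ ∈ L, ((d ℓ : ℝ) / D) = 1 := by
      rw [← Finset.sum_div]
      rw [show (∑ ℓ ∈ L, ((d ℓ : ℝ))) = (D : ℝ) by exact_mod_cast hsum]
      field_simp
    have key : ∀ ℓ ∈ L, ((d ℓ : ℝ) / D) * (1 - ((d ℓ : ℝ) - 1) / ((D : ℝ) - 1)) ^ k
        ≤ ((d ℓ : ℝ) / D) * (1 - min ((k : ℝ) * ((d ℓ : ℝ) - 1) / ((D : ℝ) - 1)) 1 / 2) := by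
      intro ℓ hℓ
      rcases Nat.eq_zero_or_pos (d ℓ) with h0 | h1
      · simp [h0]
      · have hdD : (d ℓ : ℝ) ≤ (D : ℝ) := by
          exact_mod_cast hsum ▸ Finset.single_le_sum (f := fun i => d i)
            (fun i _ => Nat.zero_le _) hℓ
        have hd1 : (1:ℝ) ≤ (d ℓ : ℝ) := by exact_mod_cast h1
        set x := ((d ℓ : ℝ) - 1) / ((D : ℝ) - 1) with hx
        have hx0 : 0 ≤ x := by apply div_nonneg <;> linarith
        have hx1 : x ≤ 1 := by rw [div_le_one hDm1]; linarith
        have := pointwise x hx0 hx1 k hk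
        have hmin : min ((k : ℝ) * ((d ℓ : ℝ) - 1) / ((D : ℝ) - 1)) 1
            = min ((k : ℝ) * x) 1 := by rw [hx]; ring_nf
        rw [hmin]
        apply mul_le_mul_of_nonneg_left this (by positivity)
    calc ∑ ℓ ∈ L, ((d ℓ : ℝ) / D) * (1 - ((d ℓ : ℝ) - 1) / ((D : ℝ) - 1)) ^ k
        ≤ ∑ ℓ ∈ L, ((d ℓ : ℝ) / D) *
            (1 - min ((k : ℝ) * ((d ℓ : ℝ) - 1) / ((D : ℝ) - 1)) 1 / 2) :=
          Finset.sum_le_sum key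
      _ = 1 - τ / 2 := by
          simp only [mul_sub, mul_one, Finset.sum_sub_distrib, hsum1, hτ,
            Finset.sum_div, mul_div_assoc]
  · have := Real.add_one_le_exp (-τ / 2)
    linarith
end

section
/- Let D ≥ 3 and k be integers with 3 ≤ k ≤ D, let 0 < ε ≤ 1, and let (d_j)_{j∈J} be a finite family of nonnegative integers with Σ_j d_j = D. Set p := Σ_{j : d_j ≤ εD} C(d_j,2)/C(D,2). Then Σ_{j : d_j ≤ εD} C(d_j,3)·C(D−3, k−3)/C(D,k) ≤ ε · ((k−2)/3) · C(k,2) · p, where C(·,·) denotes binomial coefficients. -/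
open Classical in
/-- Third-moment bound for small coalescences: with `Σ_j d_j = D`, `3 ≤ k ≤ D`, `0 < ε ≤ 1`
and `p := Σ_{j : d_j ≤ εD} C(d_j,2)/C(D,2)`, one has
`Σ_{j : d_j ≤ εD} C(d_j,3)·C(D−3,k−3)/C(D,k) ≤ ε·((k−2)/3)·C(k,2)·p`. -/
theorem stmt6 {ι : Type*} (J : Finset ι) (d : ι → ℕ) (D k : ℕ) (ε : ℝ)
    (hD : 3 ≤ D) (hk : 3 ≤ k) (hkD : k ≤ D) (hε0 : 0 < ε) (hε1 : ε ≤ 1)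
    (hsum : ∑ j ∈ J, d j = D) :
    ∑ j ∈ J.filter (fun j => (d j : ℝ) ≤ ε * D),
        (((d j).choose 3 * (D - 3).choose (k - 3) : ℕ) : ℝ) / (D.choose k : ℝ)
      ≤ ε * (((k : ℝ) - 2) / 3) * (k.choose 2 : ℝ) *
        ∑ j ∈ J.filter (fun j => (d j : ℝ) ≤ ε * D),
          ((d j).choose 2 : ℝ) / (D.choose 2 : ℝ) := by
  have hD3 : (0:ℝ) < D.choose 3 := by exact_mod_cast Nat.choose_pos hD
  have hDk : (0:ℝ) < D.choose k := by exact_mod_cast Nat.choose_pos hkD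
  have hD2 : (0:ℝ) < D.choose 2 := by exact_mod_cast Nat.choose_pos (by omega)
  -- C(D,k)*C(k,3) = C(D,3)*C(D-3,k-3)
  have hid : (D.choose k : ℝ) * k.choose 3 = (D.choose 3 : ℝ) * (D-3).choose (k-3) := by
    exact_mod_cast congrArg (Nat.cast (R := ℝ)) (Nat.choose_mul (n := D) hk)
  -- so C(D-3,k-3)/C(D,k) = C(k,3)/C(D,3)
  have hfrac : ((D-3).choose (k-3) : ℝ) / (D.choose k : ℝ) = (k.choose 3 : ℝ) / D.choose 3 := by
    field_simp
    linarith [hid]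
  -- rewrite coefficient: ε * ((k-2)/3) * C(k,2) = ε * C(k,3)
  have hk3 : (k.choose 3 : ℝ) * 3 = (k.choose 2 : ℝ) * ((k:ℝ) - 2) := by
    have := Nat.choose_succ_right_eq k 2
    have h2 : ((k - 2 : ℕ) : ℝ) = (k:ℝ) - 2 := by
      have : (2:ℕ) ≤ k := by omega
      push_cast [Nat.cast_sub this]; ring
    norm_num at this
    calc (k.choose 3 : ℝ) * 3 = ((k.choose 3 * 3 : ℕ) : ℝ) := by push_cast; ring
      _ = ((k.choose 2 * (k - 2) : ℕ) : ℝ) := congrArg (Nat.cast (R := ℝ)) this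
      _ = (k.choose 2 : ℝ) * ((k:ℝ) - 2) := by push_cast [h2]; ring
  have hcoef : ε * (((k : ℝ) - 2) / 3) * (k.choose 2 : ℝ) = ε * (k.choose 3 : ℝ) := by
    linear_combination (-ε/3) * hk3
  rw [hcoef, Finset.mul_sum]
  apply Finset.sum_le_sum
  intro j hj
  have hjd : (d j : ℝ) ≤ ε * D := (Finset.mem_filter.mp hj).2
  push_cast
  have step1 : ((d j).choose 3 : ℝ) * (D-3).choose (k-3) / D.choose k
      = (k.choose 3 : ℝ) * ((d j).choose 3 / D.choose 3) := by
    rw [mul_div_assoc, hfrac]; ring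
  rw [step1, mul_comm ε, mul_assoc]
  apply mul_le_mul_of_nonneg_left _ (by positivity)
  -- C(d j,3)/C(D,3) ≤ ε * (C(d j,2)/C(D,2))
  set n := d j with hn
  have hsub : ((n - 2 : ℕ) : ℝ) ≤ ε * ((D - 2 : ℕ) : ℝ) := by
    have hDc : ((D - 2 : ℕ) : ℝ) = (D:ℝ) - 2 := by
      push_cast [Nat.cast_sub (show (2:ℕ) ≤ D by omega)]; ring
    rcases le_or_gt n 2 with h | h
    · have : (n - 2 : ℕ) = 0 := by omega
      rw [this, hDc]
      have h3 : (3:ℝ) ≤ (D:ℝ) := by exact_mod_cast hD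
      push_cast
      nlinarith
    · have hnc : ((n - 2 : ℕ) : ℝ) = (n:ℝ) - 2 := by
        push_cast [Nat.cast_sub (show (2:ℕ) ≤ n by omega)]; ring
      rw [hnc, hDc]
      nlinarith
  have h1 : (n.choose 3 : ℝ) * 3 = (n.choose 2 : ℝ) * ((n - 2 : ℕ) : ℝ) := by
    have := Nat.choose_succ_right_eq n 2
    norm_num at this
    exact_mod_cast congrArg (Nat.cast (R := ℝ)) this
  have h2 : (D.choose 3 : ℝ) * 3 = (D.choose 2 : ℝ) * ((D - 2 : ℕ) : ℝ) := by
    have := Nat.choose_succ_right_eq D 2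
    norm_num at this
    exact_mod_cast congrArg (Nat.cast (R := ℝ)) this
  rw [← mul_div_assoc, div_le_div_iff₀ hD3 hD2]
  have hc2 : (0:ℝ) ≤ (n.choose 2 : ℝ) := by positivity
  have hkey : (n.choose 3 : ℝ) * D.choose 2 * 3 ≤ ε * n.choose 2 * D.choose 3 * 3 := by
    calc (n.choose 3 : ℝ) * D.choose 2 * 3
        = (n.choose 2 : ℝ) * (D.choose 2 : ℝ) * ((n - 2 : ℕ) : ℝ) := by
          linear_combination (D.choose 2 : ℝ) * h1
      _ ≤ (n.choose 2 : ℝ) * (D.choose 2 : ℝ) * (ε * ((D - 2 : ℕ) : ℝ)) :=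
          mul_le_mul_of_nonneg_left hsub (mul_nonneg hc2 hD2.le)
      _ = ε * n.choose 2 * D.choose 3 * 3 := by
          linear_combination (-ε) * (n.choose 2 : ℝ) * h2
  linarith
end

section
/- Let D ≥ 4 and k be integers with 4 ≤ k ≤ D, let 0 < ε ≤ 1, and let (d_j)_{j∈J} be a finite family of nonnegative integers with Σ_j d_j = D. Set p := Σ_{j : d_j ≤ εD} C(d_j,2)/C(D,2). Then Σ_{j₁ ≠ j₂, d_{j₁} ≤ εD, d_{j₂} ≤ εD} C(d_{j₁},2)·C(d_{j₂},2)·C(D−4, k−4)/C(D,k) + 6·Σ_{j : d_j ≤ εD} C(d_j,4)·C(D−4, k−4)/C(D,k) ≤ 12 · C(k,2) · C(k−2,2) · p², where C(·,·) denotes binomial coefficients. -/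
lemma key_quad (D : ℕ) (hD : 4 ≤ D) : D.choose 2 ^ 2 ≤ 72 * D.choose 4 := by
  obtain ⟨m, rfl⟩ : ∃ m, D = m + 4 := ⟨D - 4, by omega⟩
  have t2 := Nat.descFactorial_eq_factorial_mul_choose (m + 4) 2
  simp [Nat.descFactorial] at t2
  have t4 := Nat.descFactorial_eq_factorial_mul_choose (m + 4) 4
  simp [Nat.descFactorial, Nat.factorial] at t4
  have h : (2 * (m + 4).choose 2) ^ 2 ≤ 12 * (24 * (m + 4).choose 4) := by
    rw [← t2, ← t4]; nlinarith [sq_nonneg m, sq_nonneg (m+1)]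
  nlinarith [h]

lemma six_choose_four (d : ℕ) : 6 * d.choose 4 ≤ d.choose 2 ^ 2 := by
  rcases lt_or_ge d 4 with h | h
  · simp [Nat.choose_eq_zero_of_lt h]
  · have := Nat.choose_mul (n := d) (k := 4) (s := 2) (by norm_num)
    norm_num at this
    calc 6 * d.choose 4 = d.choose 4 * 6 := by ring
      _ = d.choose 2 * (d - 2).choose 2 := this
      _ ≤ d.choose 2 * d.choose 2 := by
          exact Nat.mul_le_mul_left _ (Nat.choose_le_choose 2 (by omega))
      _ = d.choose 2 ^ 2 := (sq _).symm


open Classical in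
/-- Fourth-moment bound for small coalescences: with `Σ_j d_j = D`, `4 ≤ k ≤ D`, `0 < ε ≤ 1`
and `p := Σ_{j : d_j ≤ εD} C(d_j,2)/C(D,2)`, the sum over ordered pairs `j₁ ≠ j₂` of small
indices of `C(d_{j₁},2)·C(d_{j₂},2)·C(D−4,k−4)/C(D,k)`, plus
`6·Σ_{j : d_j ≤ εD} C(d_j,4)·C(D−4,k−4)/C(D,k)`, is at most `12·C(k,2)·C(k−2,2)·p²`. -/
theorem stmt7 {ι : Type*} (J : Finset ι) (d : ι → ℕ) (D k : ℕ) (ε : ℝ)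
    (hD : 4 ≤ D) (hk : 4 ≤ k) (hkD : k ≤ D) (hε0 : 0 < ε) (hε1 : ε ≤ 1)
    (hsum : ∑ j ∈ J, d j = D) :
    (∑ j₁ ∈ J.filter (fun j => (d j : ℝ) ≤ ε * D),
        ∑ j₂ ∈ (J.filter (fun j => (d j : ℝ) ≤ ε * D)).erase j₁,
          (((d j₁).choose 2 * (d j₂).choose 2 * (D - 4).choose (k - 4) : ℕ) : ℝ)
            / (D.choose k : ℝ))
      + 6 * ∑ j ∈ J.filter (fun j => (d j : ℝ) ≤ ε * D),
          (((d j).choose 4 * (D - 4).choose (k - 4) : ℕ) : ℝ) / (D.choose k : ℝ)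
      ≤ 12 * (k.choose 2 : ℝ) * ((k - 2).choose 2 : ℝ) *
          (∑ j ∈ J.filter (fun j => (d j : ℝ) ≤ ε * D),
            ((d j).choose 2 : ℝ) / (D.choose 2 : ℝ)) ^ 2 := by
  set F := J.filter (fun j => (d j : ℝ) ≤ ε * D) with hF
  set A := (D - 4).choose (k - 4) with hA
  set B := D.choose k with hB
  set S := ∑ j ∈ F, (d j).choose 2 with hS
  have hBpos : 0 < B := Nat.choose_pos hkD
  have hC2pos : 0 < D.choose 2 := Nat.choose_pos (by omega)
  have hC4pos : 0 < D.choose 4 := Nat.choose_pos hD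
  -- natural-number core
  have hP : (∑ j₁ ∈ F, ∑ j₂ ∈ F.erase j₁, (d j₁).choose 2 * (d j₂).choose 2)
      + 6 * ∑ j ∈ F, (d j).choose 4 ≤ S ^ 2 := by
    have hsq : S ^ 2 = ∑ j₁ ∈ F, ∑ j₂ ∈ F, (d j₁).choose 2 * (d j₂).choose 2 := by
      rw [sq, hS, Finset.sum_mul_sum]
    have hsplit : ∀ j₁ ∈ F,
        ∑ j₂ ∈ F, (d j₁).choose 2 * (d j₂).choose 2
          = (∑ j₂ ∈ F.erase j₁, (d j₁).choose 2 * (d j₂).choose 2)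
            + (d j₁).choose 2 * (d j₁).choose 2 := by
      intro j₁ h₁
      rw [← Finset.sum_erase_add F _ h₁]
    rw [hsq, Finset.sum_congr rfl hsplit, Finset.sum_add_distrib]
    refine Nat.add_le_add_left ?_ _
    rw [Finset.mul_sum]
    refine Finset.sum_le_sum fun j _ => ?_
    simpa [sq] using six_choose_four (d j)
  -- binomial identities
  have hid1 : B * k.choose 4 = D.choose 4 * A := by
    simpa using Nat.choose_mul (n := D) (k := k) (s := 4) hk
  have hid2 : k.choose 4 * 6 = k.choose 2 * (k - 2).choose 2 := by
    have := Nat.choose_mul (n := k) (k := 4) (s := 2) (by norm_num)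
    norm_num at this
    exact this
  -- core nat inequality with denominators cleared
  have hcore : ((∑ j₁ ∈ F, ∑ j₂ ∈ F.erase j₁, (d j₁).choose 2 * (d j₂).choose 2)
        + 6 * ∑ j ∈ F, (d j).choose 4) * A * (D.choose 2) ^ 2
      ≤ 12 * k.choose 2 * ((k - 2).choose 2) * S ^ 2 * B := by
    calc ((∑ j₁ ∈ F, ∑ j₂ ∈ F.erase j₁, (d j₁).choose 2 * (d j₂).choose 2)
          + 6 * ∑ j ∈ F, (d j).choose 4) * A * (D.choose 2) ^ 2
        ≤ S ^ 2 * A * (D.choose 2) ^ 2 :=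
          Nat.mul_le_mul_right _ (Nat.mul_le_mul_right _ hP)
      _ ≤ S ^ 2 * A * (72 * D.choose 4) :=
          Nat.mul_le_mul_left _ (key_quad D hD)
      _ = 12 * (k.choose 4 * 6) * S ^ 2 * B := by
          rw [show (12 : ℕ) * (k.choose 4 * 6) = 72 * k.choose 4 by ring]
          calc S ^ 2 * A * (72 * D.choose 4) = 72 * (D.choose 4 * A) * S ^ 2 := by ring
            _ = 72 * (B * k.choose 4) * S ^ 2 := by rw [hid1]
            _ = 72 * k.choose 4 * S ^ 2 * B := by ring
      _ = 12 * k.choose 2 * ((k - 2).choose 2) * S ^ 2 * B := by rw [hid2]; ring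
  -- pass to ℝ
  have hL1 : (∑ j₁ ∈ F, ∑ j₂ ∈ F.erase j₁,
      (((d j₁).choose 2 * (d j₂).choose 2 * A : ℕ) : ℝ) / (B : ℝ))
      = ((∑ j₁ ∈ F, ∑ j₂ ∈ F.erase j₁, (d j₁).choose 2 * (d j₂).choose 2) * A : ℕ)
        / (B : ℝ) := by
    push_cast
    rw [Finset.sum_mul, Finset.sum_div]
    refine Finset.sum_congr rfl fun j₁ _ => ?_
    rw [Finset.sum_mul, Finset.sum_div]
  have hL2 : (∑ j ∈ F, (((d j).choose 4 * A : ℕ) : ℝ) / (B : ℝ))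
      = ((∑ j ∈ F, (d j).choose 4) * A : ℕ) / (B : ℝ) := by
    push_cast
    rw [Finset.sum_mul, Finset.sum_div]
  have hR : (∑ j ∈ F, ((d j).choose 2 : ℝ) / (D.choose 2 : ℝ))
      = (S : ℝ) / (D.choose 2 : ℝ) := by
    rw [hS]; push_cast; rw [Finset.sum_div]
  rw [hL1, hL2, hR]
  have hBR : (0 : ℝ) < (B : ℝ) := by exact_mod_cast hBpos
  have hC2R : (0 : ℝ) < (D.choose 2 : ℝ) := by exact_mod_cast hC2pos
  have h2 : (12:ℝ) * (k.choose 2 : ℝ) * ((k - 2).choose 2 : ℝ)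
      * (((S : ℝ) / (D.choose 2 : ℝ)) ^ 2)
      = ((12 * k.choose 2 * ((k - 2).choose 2) * S ^ 2 : ℕ) : ℝ)
        / ((D.choose 2 : ℝ) ^ 2) := by
    push_cast; ring
  have h1 : (((∑ j₁ ∈ F, ∑ j₂ ∈ F.erase j₁, (d j₁).choose 2 * (d j₂).choose 2) * A : ℕ) : ℝ)
        / (B : ℝ) + 6 * (((∑ j ∈ F, (d j).choose 4) * A : ℕ) : ℝ) / (B : ℝ)
      = ((((∑ j₁ ∈ F, ∑ j₂ ∈ F.erase j₁, (d j₁).choose 2 * (d j₂).choose 2)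
          + 6 * ∑ j ∈ F, (d j).choose 4) * A : ℕ) : ℝ) / (B : ℝ) := by
    push_cast; ring
  have h3 : 6 * (((∑ j ∈ F, (d j).choose 4) * A : ℕ) : ℝ) / (B : ℝ)
      = 6 * ((((∑ j ∈ F, (d j).choose 4) * A : ℕ) : ℝ) / (B : ℝ)) := by ring
  rw [← h3, h1, h2, div_le_div_iff₀ hBR (pow_pos hC2R 2)]
  calc ((((∑ j₁ ∈ F, ∑ j₂ ∈ F.erase j₁, (d j₁).choose 2 * (d j₂).choose 2)
          + 6 * ∑ j ∈ F, (d j).choose 4) * A : ℕ) : ℝ) * (D.choose 2 : ℝ) ^ 2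
      = ((((∑ j₁ ∈ F, ∑ j₂ ∈ F.erase j₁, (d j₁).choose 2 * (d j₂).choose 2)
          + 6 * ∑ j ∈ F, (d j).choose 4) * A * (D.choose 2) ^ 2 : ℕ) : ℝ) := by push_cast; ring
    _ ≤ ((12 * k.choose 2 * ((k - 2).choose 2) * S ^ 2 * B : ℕ) : ℝ) := by
        exact_mod_cast hcore
    _ = ((12 * k.choose 2 * ((k - 2).choose 2) * S ^ 2 : ℕ) : ℝ) * (B : ℝ) := by
        push_cast; ring
end

section
/- Let w ∈ ℂ and ρ ≥ 0. For each n, let F_n be a finite index set and (p_{n,j})_{j∈F_n} real numbers in [0,1]. If Σ_{j∈F_n} p_{n,j} → ρ and max_{j∈F_n} p_{n,j} → 0 as n → ∞ (with the maximum over an empty set interpreted as 0), then ∏_{j∈F_n} (1 + p_{n,j}·w) → exp(ρ·w). -/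
open Finset in
lemma prod_sub_prod_norm_le {ι : Type*} (s : Finset ι) (a b : ι → ℂ) (R : ι → ℝ)
    (hR : ∀ j ∈ s, 1 ≤ R j) (ha : ∀ j ∈ s, ‖a j‖ ≤ R j) (hb : ∀ j ∈ s, ‖b j‖ ≤ R j) :
    ‖∏ j ∈ s, a j - ∏ j ∈ s, b j‖ ≤ (∏ j ∈ s, R j) * ∑ j ∈ s, ‖a j - b j‖ := by
  classical
  induction s using Finset.induction_on with
  | empty => simp
  | @insert x s hx ih =>
    have hR' : ∀ j ∈ s, 1 ≤ R j := fun j hj => hR j (mem_insert_of_mem hj)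
    have ha' : ∀ j ∈ s, ‖a j‖ ≤ R j := fun j hj => ha j (mem_insert_of_mem hj)
    have hb' : ∀ j ∈ s, ‖b j‖ ≤ R j := fun j hj => hb j (mem_insert_of_mem hj)
    have hRpos : ∀ j ∈ s, (0:ℝ) ≤ R j := fun j hj => le_trans zero_le_one (hR' j hj)
    have hRx : 1 ≤ R x := hR x (mem_insert_self x s)
    have hprodR : (0:ℝ) ≤ ∏ j ∈ s, R j := Finset.prod_nonneg hRpos
    have hprodR1 : (1:ℝ) ≤ ∏ j ∈ s, R j := by simpa using Finset.prod_le_prod (fun j (_ : j ∈ s) => (zero_le_one : (0:ℝ) ≤ 1)) hR'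
    rw [Finset.prod_insert hx, Finset.prod_insert hx, Finset.prod_insert hx,
      Finset.sum_insert hx]
    have key : a x * ∏ j ∈ s, a j - b x * ∏ j ∈ s, b j
        = a x * (∏ j ∈ s, a j - ∏ j ∈ s, b j) + (a x - b x) * ∏ j ∈ s, b j := by ring
    rw [key]
    calc ‖a x * (∏ j ∈ s, a j - ∏ j ∈ s, b j) + (a x - b x) * ∏ j ∈ s, b j‖
        ≤ ‖a x‖ * ‖∏ j ∈ s, a j - ∏ j ∈ s, b j‖ + ‖a x - b x‖ * ‖∏ j ∈ s, b j‖ := by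
          refine (norm_add_le _ _).trans ?_
          simp [norm_mul]
      _ ≤ R x * ((∏ j ∈ s, R j) * ∑ j ∈ s, ‖a j - b j‖)
            + ‖a x - b x‖ * ∏ j ∈ s, R j := by
          gcongr <;> first
            | exact ha x (mem_insert_self x s)
            | exact ih hR' ha' hb'
            | exact (Finset.norm_prod_le _ _).trans (Finset.prod_le_prod (fun j hj => norm_nonneg _) hb')
      _ ≤ R x * (∏ j ∈ s, R j) * (‖a x - b x‖ + ∑ j ∈ s, ‖a j - b j‖) := by
          have h1 : ‖a x - b x‖ * ∏ j ∈ s, R j ≤ R x * (∏ j ∈ s, R j) * ‖a x - b x‖ := by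
            rw [mul_comm (R x * _) _, ← mul_assoc]
            have := norm_nonneg (a x - b x)
            nlinarith [mul_nonneg (mul_nonneg this hprodR) (sub_nonneg.mpr hRx)]
          nlinarith [Finset.sum_nonneg (fun j (hj : j ∈ s) => norm_nonneg (a j - b j))]

/-- Characteristic-function computation behind the Poisson paradigm: if
`Σ_{j∈F_n} p_{n,j} → ρ` and `max_{j∈F_n} p_{n,j} → 0`, then
`∏_{j∈F_n} (1 + p_{n,j}·w) → exp(ρ·w)` for every fixed `w ∈ ℂ`. -/
theorem stmt9 {ι : Type*} (F : ℕ → Finset ι) (p : ℕ → ι → ℝ) (w : ℂ) (ρ : ℝ)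
    (hρ : 0 ≤ ρ)
    (hp : ∀ n, ∀ j ∈ F n, p n j ∈ Set.Icc (0 : ℝ) 1)
    (hsum : Filter.Tendsto (fun n => ∑ j ∈ F n, p n j) Filter.atTop (nhds ρ))
    (hmax : ∀ ε : ℝ, 0 < ε → ∀ᶠ n in Filter.atTop, ∀ j ∈ F n, p n j < ε) :
    Filter.Tendsto (fun n => ∏ j ∈ F n, (1 + (p n j : ℂ) * w)) Filter.atTop
      (nhds (Complex.exp (ρ * w))) := by
  classical
  set S : ℕ → ℝ := fun n => ∑ j ∈ F n, p n j with hS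
  have hSnonneg : ∀ n, 0 ≤ S n := fun n =>
    Finset.sum_nonneg fun j hj => (hp n j hj).1
  have h2 : Filter.Tendsto (fun n => Complex.exp ((S n : ℂ) * w)) Filter.atTop
      (nhds (Complex.exp (ρ * w))) := by
    have hSc : Filter.Tendsto (fun n => ((S n : ℂ) * w)) Filter.atTop (nhds ((ρ : ℂ) * w)) :=
      ((Complex.continuous_ofReal.tendsto ρ).comp hsum).mul_const w
    exact (Complex.continuous_exp.tendsto _).comp hSc
  have h1 : Filter.Tendsto
      (fun n => (∏ j ∈ F n, (1 + (p n j : ℂ) * w)) - Complex.exp ((S n : ℂ) * w))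
      Filter.atTop (nhds 0) := by
    rw [NormedAddCommGroup.tendsto_nhds_zero]
    intro ε hε
    set C : ℝ := Real.exp ((ρ + 1) * (‖w‖ + 1)) * ((‖w‖ + 1) ^ 2 * (ρ + 1)) with hC
    have hwpos : (0:ℝ) < ‖w‖ + 1 := by positivity
    have hCpos : 0 < C := by positivity
    set δ : ℝ := min (1 / (‖w‖ + 1)) (ε / (2 * C)) with hδ
    have hδpos : 0 < δ := lt_min (by positivity) (by positivity)
    have hev2 : ∀ᶠ n in Filter.atTop, S n < ρ + 1 :=
      hsum.eventually_lt_const (by linarith)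
    filter_upwards [hmax δ hδpos, hev2] with n hn1 hn2
    -- rewrite exp of sum as product
    have hexp : Complex.exp ((S n : ℂ) * w) = ∏ j ∈ F n, Complex.exp ((p n j : ℂ) * w) := by
      rw [← Complex.exp_sum]
      congr 1
      rw [hS]
      push_cast
      rw [Finset.sum_mul]
    rw [hexp]
    -- apply the product-difference lemma
    have key := prod_sub_prod_norm_le (F n) (fun j => 1 + (p n j : ℂ) * w)
        (fun j => Complex.exp ((p n j : ℂ) * w)) (fun j => Real.exp (p n j * ‖w‖))
        (fun j hj => Real.one_le_exp (mul_nonneg ((hp n j hj).1) (norm_nonneg w)))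
        (fun j hj => by
          calc ‖1 + (p n j : ℂ) * w‖ ≤ ‖(1:ℂ)‖ + ‖(p n j : ℂ) * w‖ := norm_add_le _ _
            _ = 1 + p n j * ‖w‖ := by
                rw [norm_one, norm_mul, Complex.norm_real,
                  Real.norm_of_nonneg (hp n j hj).1]
            _ ≤ Real.exp (p n j * ‖w‖) := by
                have := Real.add_one_le_exp (p n j * ‖w‖); linarith)
        (fun j hj => by
          rw [Complex.norm_exp]
          apply Real.exp_le_exp.2
          have : ((p n j : ℂ) * w).re = p n j * w.re := by
            simp [Complex.mul_re]
          rw [this]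
          have hre : w.re ≤ ‖w‖ := Complex.re_le_norm w
          exact mul_le_mul_of_nonneg_left hre (hp n j hj).1)
    -- bound the product of R's
    have hprodR : (∏ j ∈ F n, Real.exp (p n j * ‖w‖)) ≤ Real.exp ((ρ + 1) * (‖w‖ + 1)) := by
      rw [← Real.exp_sum]
      apply Real.exp_le_exp.2
      rw [← Finset.sum_mul]
      calc S n * ‖w‖ ≤ (ρ + 1) * ‖w‖ :=
            mul_le_mul_of_nonneg_right hn2.le (norm_nonneg w)
        _ ≤ (ρ + 1) * (‖w‖ + 1) := by nlinarith
    -- bound each difference term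
    have hterm : ∀ j ∈ F n,
        ‖(1 + (p n j : ℂ) * w) - Complex.exp ((p n j : ℂ) * w)‖ ≤ δ * ‖w‖ ^ 2 * p n j := by
      intro j hj
      have hp0 := (hp n j hj).1
      have hpδ : p n j < δ := hn1 j hj
      have habs : ‖(p n j : ℂ) * w‖ ≤ 1 := by
        rw [norm_mul, Complex.norm_real, Real.norm_of_nonneg hp0]
        have hδle : δ ≤ 1 / (‖w‖ + 1) := min_le_left _ _
        have : p n j * ‖w‖ ≤ (1 / (‖w‖ + 1)) * ‖w‖ := by
          apply mul_le_mul (by linarith) le_rfl (norm_nonneg w) (by positivity)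
        calc p n j * ‖w‖ ≤ (1 / (‖w‖ + 1)) * ‖w‖ := this
          _ ≤ 1 := by rw [div_mul_eq_mul_div, one_mul, div_le_one hwpos]; linarith
      have hb := Complex.norm_exp_sub_one_sub_id_le habs
      rw [norm_sub_rev]
      have heq : Complex.exp ((p n j : ℂ) * w) - (1 + (p n j : ℂ) * w)
          = Complex.exp ((p n j : ℂ) * w) - 1 - (p n j : ℂ) * w := by ring
      rw [heq]
      calc ‖Complex.exp ((p n j : ℂ) * w) - 1 - (p n j : ℂ) * w‖
          ≤ ‖(p n j : ℂ) * w‖ ^ 2 := hb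
        _ = (p n j) ^ 2 * ‖w‖ ^ 2 := by
            rw [norm_mul, Complex.norm_real, Real.norm_of_nonneg hp0]
            ring
        _ ≤ δ * ‖w‖ ^ 2 * p n j := by
            nlinarith [mul_le_mul_of_nonneg_right
              (mul_le_mul_of_nonneg_left hpδ.le hp0) (sq_nonneg ‖w‖)]
    have hsum_le : (∑ j ∈ F n, ‖(1 + (p n j : ℂ) * w) - Complex.exp ((p n j : ℂ) * w)‖)
        ≤ δ * ‖w‖ ^ 2 * S n := by
      calc (∑ j ∈ F n, ‖(1 + (p n j : ℂ) * w) - Complex.exp ((p n j : ℂ) * w)‖)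
          ≤ ∑ j ∈ F n, δ * ‖w‖ ^ 2 * p n j := Finset.sum_le_sum hterm
        _ = δ * ‖w‖ ^ 2 * S n := by rw [hS, ← Finset.mul_sum]
    have hsumnn : (0:ℝ) ≤ ∑ j ∈ F n,
        ‖(1 + (p n j : ℂ) * w) - Complex.exp ((p n j : ℂ) * w)‖ :=
      Finset.sum_nonneg fun j hj => norm_nonneg _
    have hw2 : ‖w‖ ^ 2 ≤ (‖w‖ + 1) ^ 2 := by nlinarith [norm_nonneg w]
    have hinner : δ * ‖w‖ ^ 2 * S n ≤ (‖w‖ + 1) ^ 2 * (ρ + 1) * δ := by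
      nlinarith [mul_le_mul hw2 hn2.le (hSnonneg n)
        (by positivity : (0:ℝ) ≤ (‖w‖ + 1) ^ 2), hδpos.le]
    have hCδ : C * (ε / (2 * C)) = ε / 2 := by field_simp
    calc ‖(∏ j ∈ F n, (1 + (p n j : ℂ) * w)) - ∏ j ∈ F n, Complex.exp ((p n j : ℂ) * w)‖
        ≤ (∏ j ∈ F n, Real.exp (p n j * ‖w‖)) *
            ∑ j ∈ F n, ‖(1 + (p n j : ℂ) * w) - Complex.exp ((p n j : ℂ) * w)‖ := key
      _ ≤ Real.exp ((ρ + 1) * (‖w‖ + 1)) * (δ * ‖w‖ ^ 2 * S n) :=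
          mul_le_mul hprodR hsum_le hsumnn (Real.exp_nonneg _)
      _ ≤ C * δ := by
          rw [hC]
          have := mul_le_mul_of_nonneg_left hinner
            (Real.exp_nonneg ((ρ + 1) * (‖w‖ + 1)))
          nlinarith [this]
      _ ≤ C * (ε / (2 * C)) := mul_le_mul_of_nonneg_left (min_le_right _ _) hCpos.le
      _ < ε := by rw [hCδ]; linarith
  have := h1.add h2
  simpa using this
end
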